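/- Let H be a finite non-abelian group with generating set X, let F_d be the free group of rank d with free generating set Y, and let M = max{ l_X(h) : h ∈ H } be the maximal word length of an element of H with respect to X. Then there exists c ∈ H (possibly c = 1) such that every element of the restricted regular wreath product F_d ≀ H is a product of at most M·(d·|H| + 1) + 1 palindromes with respect to the generating set consisting of the canonical copies of X ∪ {c} and of Y; that is, pw(F_d ≀ H, X ∪ {c} ∪ Y) ≤ M·(d·|H| + 1) + 1. -/

import Mathlib

open Function

section WreathDefs

variable (G A : Type*) [Group G] [Group A]

/-- The subgroup of finitely supported functions `A → G` (pointwise operations). -/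
def restrictedBase : Subgroup (A → G) where
  carrier := {f | (Function.mulSupport f).Finite}
  one_mem' := by simp [Function.mulSupport_one]
  mul_mem' := fun hf hg => (hf.union hg).subset (Function.mulSupport_mul _ _)
  inv_mem' := fun hf => by simpa [Function.mulSupport_inv] using hf

variable {G A}

lemma shift_mem (a : A) (f : restrictedBase G A) :
    (fun x => (f : A → G) (a * x)) ∈ restrictedBase G A := by
  have h : Function.mulSupport (fun x => (f : A → G) (a * x)) =
      (fun x : A => a * x) ⁻¹' Function.mulSupport (f : A → G) :=
    Function.mulSupport_comp_eq_preimage _ _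
  show (Function.mulSupport _).Finite
  rw [h]
  exact f.2.preimage (mul_right_injective a).injOn

/-- The translation automorphism of the restricted base, `(a • f) x = f (a⁻¹ * x)`. -/
noncomputable def shiftEquiv (a : A) : restrictedBase G A ≃* restrictedBase G A where
  toFun f := ⟨fun x => (f : A → G) (a⁻¹ * x), shift_mem a⁻¹ f⟩
  invFun f := ⟨fun x => (f : A → G) (a * x), shift_mem a f⟩
  left_inv f := by ext x; simp
  right_inv f := by ext x; simp
  map_mul' f g := by ext x; simp

variable (G A)

/-- The translation action of `A` on finitely supported functions `A → G`. -/
noncomputable def wreathAction : A →* MulAut (restrictedBase G A) where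
  toFun a := shiftEquiv a
  map_one' := by ext f x; simp [shiftEquiv]
  map_mul' a b := by ext f x; simp [shiftEquiv, mul_assoc]

/-- The restricted regular wreath product `G ≀ A`. -/
noncomputable abbrev Wreath := restrictedBase G A ⋊[wreathAction G A] A

variable {G A}

/-- The finitely supported function equal to `g` at `1` and trivial elsewhere. -/
noncomputable def atOne (g : G) : restrictedBase G A :=
  letI := Classical.decEq A
  ⟨fun x => if x = 1 then g else 1, by
    apply Set.Finite.subset (Set.finite_singleton (1 : A))
    intro x hx
    simp only [Function.mem_mulSupport] at hx
    by_contra hx1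
    exact hx (if_neg (by simpa using hx1))⟩

/-- The natural generating set of `G ≀ A` built from generating sets of the factors. -/
noncomputable def wreathGens (XB : Set G) (XA : Set A) : Set (Wreath G A) :=
  ((fun g => SemidirectProduct.inl (atOne g)) '' XB) ∪ (SemidirectProduct.inr '' XA)

end WreathDefs

section Palindromes

variable {W : Type*} [Group W]

/-- `g` is a palindrome with respect to `S`: it is the product of a word over `S`
(entries in `S ∪ S⁻¹`) which reads the same forwards and backwards. -/
def IsPalindrome (S : Set W) (g : W) : Prop :=
  ∃ l : List W, (∀ x ∈ l, x ∈ S ∪ S⁻¹) ∧ l.reverse = l ∧ l.prod = g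

/-- `g` is a product of at most `n` palindromes with respect to `S`. -/
def ProdOfPal (S : Set W) (n : ℕ) (g : W) : Prop :=
  ∃ l : List W, l.length ≤ n ∧ (∀ p ∈ l, IsPalindrome S p) ∧ l.prod = g

/-- The palindromic width of a group with respect to `S` (`⊤` if infinite). -/
noncomputable def palWidth (S : Set W) : ℕ∞ :=
  sInf {n : ℕ∞ | ∃ m : ℕ, n = (m : ℕ∞) ∧ ∀ g : W, ProdOfPal S m g}

/-- The word length of `g` with respect to `S`. -/
noncomputable def wordLength (S : Set W) (g : W) : ℕ :=
  sInf {n : ℕ | ∃ l : List W, l.length = n ∧ (∀ x ∈ l, x ∈ S ∪ S⁻¹) ∧ l.prod = g}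

end Palindromes

/-!
If a word `w` over `S` spells `a` and its letterwise inverse spells `b`, then `a * b⁻¹` is the
palindrome `w w^rev`; these pairs `(a, b)` form the subgroup `pairGroup S` of `G × G`. As `H` is not
abelian, some `c` makes `X ∪ {c}` inverted by no endomorphism of `H`, so `pairGroup (X ∪ {c})` is
not the graph of a homomorphism and contains a vertical pair `(1, ℓ)` with `ℓ ≠ 1`. In `F_d ≀ H`,
commutators of its image with the pairs `(u, σ u)`, where `σ` inverts the free generators, give all
pairs `(β, 1)` with `β` valued in `[F_d, F_d]`. So every `g` is a palindrome times `f * h` with each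
`f t` of the form `∏ yᵢ ^ eᵢ`. Putting `yᵢ ^ eᵢ` between a word `w` for `t` and its reverse gives
the palindrome `w yᵢ^eᵢ w^rev`, which is `yᵢ ^ eᵢ` at coordinate `t` up to a top-group factor; so
`f * h` is a product of `d * |H|` palindromes and at most `M` letters.
-/

section PalindromeProducts

variable {K L : Type*} [Group K] [Group L] {S : Set K}

theorem exists_list_prod_eq_of_closure_eq_top (hS : Subgroup.closure S = ⊤) (g : K) :
    ∃ l : List K, (∀ x ∈ l, x ∈ S ∪ S⁻¹) ∧ l.prod = g := by
  have hg : g ∈ Submonoid.closure (S ∪ S⁻¹) := by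
    rw [← Subgroup.closure_toSubmonoid, hS]; trivial
  exact Submonoid.exists_list_of_mem_closure hg

theorem exists_list_length_eq_wordLength (hS : Subgroup.closure S = ⊤) (g : K) :
    ∃ l : List K, l.length = wordLength S g ∧ (∀ x ∈ l, x ∈ S ∪ S⁻¹) ∧ l.prod = g := by
  obtain ⟨l, hl, rfl⟩ := exists_list_prod_eq_of_closure_eq_top hS g
  exact Nat.sInf_mem (s := {n | ∃ l' : List K, l'.length = n ∧ (∀ x ∈ l', x ∈ S ∪ S⁻¹) ∧
    l'.prod = l.prod}) ⟨l.length, l, rfl, hl, rfl⟩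

theorem wordLength_pos (hS : Subgroup.closure S = ⊤) {g : K} (hg : g ≠ 1) :
    0 < wordLength S g := by
  obtain ⟨l, hlen, -, rfl⟩ := exists_list_length_eq_wordLength hS g
  rw [← hlen, List.length_pos_iff]
  rintro rfl
  exact hg List.prod_nil

theorem map_mem_union_inv {T : Set L} (φ : K →* L) (hφ : ∀ s ∈ S, φ s ∈ T) {x : K}
    (hx : x ∈ S ∪ S⁻¹) : φ x ∈ T ∪ T⁻¹ := by
  rcases hx with hx | hx
  · exact Or.inl (hφ x hx)
  · exact Or.inr (by simpa using hφ _ hx)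

theorem IsPalindrome.of_mem {s : K} (hs : s ∈ S ∪ S⁻¹) : IsPalindrome S s :=
  ⟨[s], by simpa using hs, rfl, List.prod_singleton⟩

theorem IsPalindrome.zpow {s : K} (hs : s ∈ S) (n : ℤ) : IsPalindrome S (s ^ n) := by
  obtain ⟨m, rfl | rfl⟩ := Int.eq_nat_or_neg n
  · exact ⟨List.replicate m s, by simp [hs], List.reverse_replicate .., by simp⟩
  · exact ⟨List.replicate m s⁻¹, by simp [hs], List.reverse_replicate .., by simp⟩

theorem IsPalindrome.list_prod_mul_mul_reverse_prod {p : K} (hp : IsPalindrome S p)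
    {w : List K} (hw : ∀ x ∈ w, x ∈ S ∪ S⁻¹) : IsPalindrome S (w.prod * p * w.reverse.prod) := by
  obtain ⟨l, hl, hrev, rfl⟩ := hp
  refine ⟨w ++ l ++ w.reverse, ?_, by simp [hrev], by simp [mul_assoc]⟩
  simp only [List.mem_append, List.mem_reverse]
  rintro x ((hx | hx) | hx)
  exacts [hw x hx, hl x hx, hw x hx]

theorem IsPalindrome.map {T : Set L} (φ : K →* L) (hφ : ∀ s ∈ S, φ s ∈ T) {p : K}
    (hp : IsPalindrome S p) : IsPalindrome T (φ p) := by
  obtain ⟨l, hl, hrev, rfl⟩ := hp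
  refine ⟨l.map φ, ?_, by rw [← List.map_reverse, hrev], (map_list_prod φ l).symm⟩
  simp only [List.mem_map]
  rintro _ ⟨x, hx, rfl⟩
  exact map_mem_union_inv φ hφ (hl x hx)

theorem IsPalindrome.prodOfPal {p : K} (hp : IsPalindrome S p) : ProdOfPal S 1 p :=
  ⟨[p], le_rfl, by simpa using hp, List.prod_singleton⟩

theorem prodOfPal_zero_one : ProdOfPal S 0 1 :=
  ⟨[], le_rfl, by simp, List.prod_nil⟩

theorem ProdOfPal.mono {m n : ℕ} {g : K} (hg : ProdOfPal S m g) (hmn : m ≤ n) :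
    ProdOfPal S n g :=
  let ⟨l, hlen, hl, hprod⟩ := hg
  ⟨l, hlen.trans hmn, hl, hprod⟩

theorem ProdOfPal.mul {m n : ℕ} {g h : K} (hg : ProdOfPal S m g) (hh : ProdOfPal S n h) :
    ProdOfPal S (m + n) (g * h) := by
  obtain ⟨l, hlen, hl, rfl⟩ := hg
  obtain ⟨l', hlen', hl', rfl⟩ := hh
  refine ⟨l ++ l', by simpa using add_le_add hlen hlen', ?_, List.prod_append⟩
  simp only [List.mem_append]
  rintro p (hp | hp)
  exacts [hl p hp, hl' p hp]

theorem ProdOfPal.map {T : Set L} (φ : K →* L) (hφ : ∀ s ∈ S, φ s ∈ T) {n : ℕ} {g : K}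
    (hg : ProdOfPal S n g) : ProdOfPal T n (φ g) := by
  obtain ⟨l, hlen, hl, rfl⟩ := hg
  refine ⟨l.map φ, by simpa using hlen, ?_, (map_list_prod φ l).symm⟩
  simp only [List.mem_map]
  rintro _ ⟨p, hp, rfl⟩
  exact (hl p hp).map φ hφ

theorem prodOfPal_wordLength (hS : Subgroup.closure S = ⊤) (g : K) :
    ProdOfPal S (wordLength S g) g := by
  obtain ⟨l, hlen, hl, rfl⟩ := exists_list_length_eq_wordLength hS g
  exact ⟨l, hlen.le, fun x hx => .of_mem (hl x hx), rfl⟩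

end PalindromeProducts

section PairGroup

open scoped commutatorElement

variable {K L : Type*} [Group K] [Group L] {S : Set K}

def pairGroup (S : Set K) : Subgroup (K × K) :=
  Subgroup.closure ((fun s => (s, s⁻¹)) '' S)

theorem mk_mem_pairGroup {s : K} (hs : s ∈ S) : (s, s⁻¹) ∈ pairGroup S :=
  Subgroup.subset_closure ⟨s, hs, rfl⟩

theorem mk_inv_mem_pairGroup {s : K} (hs : s ∈ S) : (s⁻¹, s) ∈ pairGroup S := by
  simpa using inv_mem (mk_mem_pairGroup hs)

theorem swap_mem_pairGroup {a b : K} (h : (a, b) ∈ pairGroup S) : (b, a) ∈ pairGroup S := by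
  have hle : pairGroup S ≤ (pairGroup S).comap (MulEquiv.prodComm : K × K ≃* K × K) :=
    (Subgroup.closure_le _).2 fun _ ⟨s, hs, hp⟩ => hp ▸ mk_inv_mem_pairGroup hs
  exact hle h

theorem map_mem_pairGroup {T : Set L} (φ : K →* L) (hφ : ∀ s ∈ S, φ s ∈ T) {a b : K}
    (h : (a, b) ∈ pairGroup S) : (φ a, φ b) ∈ pairGroup T := by
  have hle : pairGroup S ≤ (pairGroup T).comap (φ.prodMap φ) :=
    (Subgroup.closure_le _).2 fun _ ⟨s, hs, hp⟩ => hp ▸ by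
      simpa using mk_mem_pairGroup (hφ s hs)
  exact hle h

theorem exists_mem_pairGroup (hS : Subgroup.closure S = ⊤) (a : K) :
    ∃ b, (a, b) ∈ pairGroup S := by
  have hle : Subgroup.closure S ≤ (pairGroup S).map (MonoidHom.fst K K) :=
    (Subgroup.closure_le _).2 fun s hs => ⟨(s, s⁻¹), mk_mem_pairGroup hs, rfl⟩
  obtain ⟨⟨a, b⟩, hab, rfl⟩ := hle (hS ▸ Subgroup.mem_top a)
  exact ⟨b, hab⟩

theorem mk_map_mem_pairGroup (hS : Subgroup.closure S = ⊤) {σ : K →* K}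
    (hσ : ∀ s ∈ S, σ s = s⁻¹) (u : K) : (u, σ u) ∈ pairGroup S := by
  have hle : Subgroup.closure S ≤ (pairGroup S).comap ((MonoidHom.id K).prod σ) :=
    (Subgroup.closure_le _).2 fun s hs => by simpa [hσ s hs] using mk_mem_pairGroup hs
  exact hle (hS ▸ Subgroup.mem_top u)

theorem exists_ne_one_mk_one_mem_pairGroup (hS : Subgroup.closure S = ⊤)
    (hno : ¬∃ ψ : K →* K, ∀ s ∈ S, ψ s = s⁻¹) : ∃ ℓ ≠ 1, ((1 : K), ℓ) ∈ pairGroup S := by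
  by_contra! hvert
  have hinj : Function.Injective (Prod.fst ∘ (pairGroup S).subtype) := by
    rintro ⟨⟨a, b⟩, hab⟩ ⟨⟨a', b'⟩, hab'⟩ (rfl : a = a')
    have h1 : ((1 : K), b * b'⁻¹) ∈ pairGroup S := by simpa using mul_mem hab (inv_mem hab')
    by_contra hne
    exact hvert _ (by simpa [mul_inv_eq_one] using hne) h1
  have hsurj : Function.Surjective (Prod.fst ∘ (pairGroup S).subtype) := fun a =>
    let ⟨b, hab⟩ := exists_mem_pairGroup hS a
    ⟨⟨(a, b), hab⟩, rfl⟩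
  obtain ⟨ψ, hψ⟩ := Subgroup.exists_eq_graph ⟨hinj, hsurj⟩
  refine hno ⟨ψ, fun s hs => ?_⟩
  have h := mk_mem_pairGroup hs
  rwa [hψ, MonoidHom.mem_graph] at h

theorem exists_list_of_mem_pairGroup {a b : K} (h : (a, b) ∈ pairGroup S) :
    ∃ l : List K, (∀ x ∈ l, x ∈ S ∪ S⁻¹) ∧ l.prod = a ∧ l.reverse.prod = b⁻¹ := by
  suffices ∀ z ∈ pairGroup S,
      ∃ l : List K, (∀ x ∈ l, x ∈ S ∪ S⁻¹) ∧ l.prod = z.1 ∧ l.reverse.prod = z.2⁻¹ from this _ h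
  intro z hz
  induction hz using Subgroup.closure_induction with
  | mem _ hx =>
    obtain ⟨s, hs, rfl⟩ := hx
    exact ⟨[s], by simp [hs], by simp, by simp⟩
  | one => exact ⟨[], by simp, by simp, by simp⟩
  | mul _ _ _ _ hx hy =>
    obtain ⟨l, hl, h1, h2⟩ := hx
    obtain ⟨l', hl', h1', h2'⟩ := hy
    refine ⟨l ++ l', ?_, by simp [h1, h1'], by simp [h2, h2']⟩
    simp only [List.mem_append]
    rintro x (hx | hx)
    exacts [hl x hx, hl' x hx]
  | inv _ _ hx =>
    obtain ⟨l, hl, h1, h2⟩ := hx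
    refine ⟨(l.map (·⁻¹)).reverse, ?_, by simp [← h1, List.prod_inv_reverse], ?_⟩
    · simp only [List.mem_reverse, List.mem_map]
      rintro _ ⟨x, hx, rfl⟩
      rcases hl x hx with hx | hx
      exacts [Or.inr (by simpa using hx), Or.inl hx]
    · simp [← h2, List.prod_inv_reverse]

theorem IsPalindrome.mul_inv_of_mem_pairGroup {a b : K} (h : (a, b) ∈ pairGroup S) :
    IsPalindrome S (a * b⁻¹) := by
  obtain ⟨l, hl, h1, h2⟩ := exists_list_of_mem_pairGroup h
  refine ⟨l ++ l.reverse, ?_, by simp, by simp [h1, h2]⟩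
  simp only [List.mem_append, List.mem_reverse]
  rintro x (hx | hx) <;> exact hl x hx

theorem mk_commutatorElement_one_mem {P : Subgroup (K × K)} {x y a b z : K}
    (hz : ((1 : K), z) ∈ P) (hxy : (x, y) ∈ P) (hab : (a, b) ∈ P)
    (hcomm : Commute (z * y * z⁻¹) b) : (⁅x, a⁆, (1 : K)) ∈ P := by
  have hconj := mul_mem (mul_mem hz hxy) (inv_mem hz)
  have h := mul_mem (mul_mem (mul_mem hconj hab) (inv_mem hconj)) (inv_mem hab)
  have hy : z * y * z⁻¹ * b * (z * y * z⁻¹)⁻¹ * b⁻¹ = 1 := by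
    rw [hcomm.eq, mul_inv_cancel_right, mul_inv_cancel]
  convert h using 1
  ext
  · simp [commutatorElement_def]
  · simp only [Prod.snd_mul, Prod.snd_inv, ← hy]

end PairGroup

theorem exists_not_exists_monoidHom_eq_inv {K : Type*} [Group K] {X : Set K}
    (hX : Subgroup.closure X = ⊤) (hK : ∃ a b : K, a * b ≠ b * a) :
    ∃ c : K, ¬∃ ψ : K →* K, ∀ x ∈ X ∪ {c}, ψ x = x⁻¹ := by
  by_contra! h
  choose ψ hψ using h
  -- all the `ψ c` agree on `X`, hence coincide, so `ψ 1` inverts every element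
  have hinv (c : K) : ψ 1 c = c⁻¹ := by
    have hc : ψ c = ψ 1 := MonoidHom.eq_of_eqOn_dense hX fun x hx => by
      rw [hψ c x (.inl hx), hψ 1 x (.inl hx)]
    rw [← hc, hψ c c (.inr rfl)]
  obtain ⟨a, b, hab⟩ := hK
  refine hab (inv_injective ?_)
  rw [← hinv, map_mul, hinv, hinv, mul_inv_rev]

theorem FreeGroup.exists_prodOfPal_abelianization_of_eq {d : ℕ} (v : FreeGroup (Fin d)) :
    ∃ p, ProdOfPal (Set.range FreeGroup.of) d p ∧ Abelianization.of p = Abelianization.of v := by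
  have hexp : ∀ v ∈ Subgroup.closure (Set.range (FreeGroup.of : Fin d → FreeGroup (Fin d))),
      ∃ e : Fin d → ℤ, Abelianization.of v = ∏ i, Abelianization.of (FreeGroup.of i) ^ e i := by
    intro v hv
    induction hv using Subgroup.closure_induction with
    | mem _ hx =>
      obtain ⟨j, rfl⟩ := hx
      exact ⟨Pi.single j 1, by simp [Pi.single_apply]⟩
    | one => exact ⟨0, by simp⟩
    | mul _ _ _ _ hx hy =>
      obtain ⟨e, he⟩ := hx
      obtain ⟨e', he'⟩ := hy
      exact ⟨e + e', by simp [he, he', zpow_add, Finset.prod_mul_distrib]⟩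
    | inv _ _ hx =>
      obtain ⟨e, he⟩ := hx
      exact ⟨-e, by simp [he]⟩
  obtain ⟨e, he⟩ := hexp v (by rw [FreeGroup.closure_range_of]; trivial)
  refine ⟨((List.finRange d).map fun i => FreeGroup.of i ^ e i).prod, ?_, ?_⟩
  · refine ⟨(List.finRange d).map fun i => FreeGroup.of i ^ e i, by simp, ?_, rfl⟩
    simp only [List.mem_map]
    rintro _ ⟨i, -, rfl⟩
    exact .zpow (Set.mem_range_self i) _
  · simp [he, map_list_prod, Fin.prod_univ_def, Function.comp_def]

namespace restrictedBase

variable {G A : Type*} [Group G]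

noncomputable def mulSingle (t : A) : G →* restrictedBase G A :=
  letI := Classical.decEq A
  { toFun g := ⟨Pi.mulSingle t g, (Set.finite_singleton t).subset Pi.mulSupport_mulSingle_subset⟩
    map_one' := Subtype.ext (Pi.mulSingle_one t)
    map_mul' g h := Subtype.ext (Pi.mulSingle_mul (f := fun _ => G) t g h) }

theorem mulSingle_apply_self (t : A) (g : G) : (mulSingle t g : A → G) t = g := by
  simp [mulSingle]

theorem mulSingle_apply_of_ne {t x : A} (h : x ≠ t) (g : G) :
    (mulSingle t g : A → G) x = 1 := by
  simp [mulSingle, h]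

theorem mulSingle_commute {s t : A} (h : s ≠ t) (g g' : G) :
    Commute (mulSingle s g) (mulSingle t g') := by
  refine Subtype.ext (funext fun x => ?_)
  simp only [Subgroup.coe_mul, Pi.mul_apply]
  by_cases hx : x = s
  · subst hx
    rw [mulSingle_apply_of_ne h, mul_one, one_mul]
  · rw [mulSingle_apply_of_ne hx, mul_one, one_mul]

theorem atOne_eq_mulSingle [Group A] (g : G) : (atOne g : restrictedBase G A) = mulSingle 1 g := by
  refine Subtype.ext (funext fun x => ?_)
  by_cases hx : x = 1
  · subst hx
    simp [atOne, mulSingle_apply_self]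
  · simp [atOne, hx, mulSingle_apply_of_ne hx]

theorem wreathAction_mulSingle [Group A] (a t : A) (g : G) :
    wreathAction G A a (mulSingle t g) = mulSingle (a * t) g := by
  refine Subtype.ext (funext fun x => ?_)
  change (mulSingle t g : A → G) (a⁻¹ * x) = _
  by_cases hx : x = a * t
  · simp [hx, mulSingle_apply_self]
  · rw [mulSingle_apply_of_ne hx, mulSingle_apply_of_ne]
    rwa [Ne, inv_mul_eq_iff_eq_mul]

theorem list_prod_map_mulSingle [Fintype A] (f : restrictedBase G A) :
    (Finset.univ.toList.map fun t => mulSingle t ((f : A → G) t)).prod = f := by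
  classical
  suffices ∀ l : List A, l.Nodup → ∀ x,
      ((l.map fun t => mulSingle t ((f : A → G) t)).prod : A → G) x =
        if x ∈ l then (f : A → G) x else 1 by
    exact Subtype.ext (funext fun x => by
      simpa using this Finset.univ.toList (Finset.nodup_toList _) x)
  intro l hl x
  induction l with
  | nil => rfl
  | cons t l ih =>
    rw [List.nodup_cons] at hl
    rw [List.map_cons, List.prod_cons, Subgroup.coe_mul, Pi.mul_apply, ih hl.2]
    by_cases hx : x = t
    · subst hx
      simp [hl.1, mulSingle_apply_self]
    · simp [hx, mulSingle_apply_of_ne hx]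

theorem mem_of_forall_mulSingle_mem [Fintype A] {K : Subgroup (restrictedBase G A)}
    {f : restrictedBase G A} (h : ∀ t, mulSingle t ((f : A → G) t) ∈ K) : f ∈ K := by
  rw [← list_prod_map_mulSingle f]
  exact K.list_prod_mem (by simpa using h)

end restrictedBase

section Wreath

open SemidirectProduct restrictedBase
open scoped commutatorElement

variable {G A : Type*} [Group G] [Group A] {XB : Set G} {XA : Set A}

theorem inl_mulSingle_one_mem_wreathGens {g : G} (hg : g ∈ XB) :
    (inl (mulSingle 1 g) : Wreath G A) ∈ wreathGens XB XA :=
  Or.inl ⟨g, hg, congrArg inl (atOne_eq_mulSingle g)⟩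

theorem inr_mem_wreathGens {a : A} (ha : a ∈ XA) : (inr a : Wreath G A) ∈ wreathGens XB XA :=
  Or.inr ⟨a, ha, rfl⟩

theorem inl_mulSingle (t : A) (g : G) :
    (inl (mulSingle t g) : Wreath G A) = inr t * inl (mulSingle 1 g) * inr t⁻¹ := by
  rw [← inl_aut, wreathAction_mulSingle, mul_one]

theorem closure_wreathGens [Fintype A] (hXB : Subgroup.closure XB = ⊤)
    (hXA : Subgroup.closure XA = ⊤) : Subgroup.closure (wreathGens XB XA) = ⊤ := by
  set C := Subgroup.closure (wreathGens XB XA)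
  have hinr (a : A) : inr a ∈ C := by
    have hle : Subgroup.closure XA ≤ C.comap inr := (Subgroup.closure_le _).2 fun _ ha =>
      Subgroup.subset_closure (inr_mem_wreathGens ha)
    exact hle (hXA ▸ Subgroup.mem_top a)
  have hinl_one (g : G) : inl (mulSingle 1 g) ∈ C := by
    have hle : Subgroup.closure XB ≤ C.comap (inl.comp (mulSingle 1)) :=
      (Subgroup.closure_le _).2 fun _ hg =>
        Subgroup.subset_closure (inl_mulSingle_one_mem_wreathGens hg)
    exact hle (hXB ▸ Subgroup.mem_top g)
  have hinl (f : restrictedBase G A) : inl f ∈ C :=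
    mem_of_forall_mulSingle_mem (K := C.comap inl) fun t => by
      rw [Subgroup.mem_comap, inl_mulSingle]
      exact mul_mem (mul_mem (hinr t) (hinl_one _)) (hinr _)
  exact eq_top_iff.2 fun x _ => inl_left_mul_inr_right x ▸ mul_mem (hinl _) (hinr _)

theorem exists_isPalindrome_inr_mul_inl_mulSingle_one_mul_inr (hXA : Subgroup.closure XA = ⊤)
    {p : G} (hp : IsPalindrome XB p) (a : A) :
    ∃ b, IsPalindrome (wreathGens XB XA) (inr a * inl (mulSingle 1 p) * inr b) := by
  obtain ⟨w, hw, rfl⟩ := exists_list_prod_eq_of_closure_eq_top hXA a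
  have hw' : ∀ x ∈ w.map inr, x ∈ wreathGens XB XA ∪ (wreathGens XB XA)⁻¹ := by
    simp only [List.mem_map]
    rintro _ ⟨x, hx, rfl⟩
    exact map_mem_union_inv inr (fun _ => inr_mem_wreathGens) (hw x hx)
  have h := (hp.map (inl.comp (mulSingle 1)) fun _ => inl_mulSingle_one_mem_wreathGens)
    |>.list_prod_mul_mul_reverse_prod hw'
  exact ⟨w.reverse.prod, by simpa [map_list_prod, ← List.map_reverse] using h⟩

/-- The left factor `inr a` is arbitrary so that the right factor of one element can be absorbed
into the left factor of the next: this makes the notion multiplicative. -/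
def BaseProdOfPal (XB : Set G) (XA : Set A) (n : ℕ) (f : restrictedBase G A) : Prop :=
  ∀ a : A, ∃ b : A, ProdOfPal (wreathGens XB XA) n (inr a * inl f * inr b)

theorem baseProdOfPal_zero_one : BaseProdOfPal XB XA 0 1 :=
  fun a => ⟨a⁻¹, by simpa using prodOfPal_zero_one⟩

theorem BaseProdOfPal.mono {m n : ℕ} {f : restrictedBase G A} (hf : BaseProdOfPal XB XA m f)
    (hmn : m ≤ n) : BaseProdOfPal XB XA n f :=
  fun a => let ⟨b, hb⟩ := hf a; ⟨b, hb.mono hmn⟩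

theorem BaseProdOfPal.mul {m n : ℕ} {f f' : restrictedBase G A} (hf : BaseProdOfPal XB XA m f)
    (hf' : BaseProdOfPal XB XA n f') : BaseProdOfPal XB XA (m + n) (f * f') := by
  intro a
  obtain ⟨b, hb⟩ := hf a
  obtain ⟨b', hb'⟩ := hf' b⁻¹
  refine ⟨b', ?_⟩
  convert hb.mul hb' using 1
  simp only [map_mul, map_inv]
  group

theorem BaseProdOfPal.list_prod {n : ℕ} {l : List (restrictedBase G A)}
    (h : ∀ f ∈ l, BaseProdOfPal XB XA n f) : BaseProdOfPal XB XA (l.length * n) l.prod := by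
  induction l with
  | nil => simpa using baseProdOfPal_zero_one
  | cons f l ih =>
    rw [List.length_cons, add_mul, one_mul, add_comm, List.prod_cons]
    exact (h f List.mem_cons_self).mul (ih fun f' hf' => h f' (List.mem_cons_of_mem f hf'))

theorem baseProdOfPal_mulSingle_of_isPalindrome (hXA : Subgroup.closure XA = ⊤) {p : G}
    (hp : IsPalindrome XB p) (t : A) : BaseProdOfPal XB XA 1 (mulSingle t p) := by
  intro a
  obtain ⟨b, hb⟩ := exists_isPalindrome_inr_mul_inl_mulSingle_one_mul_inr hXA hp (a * t)
  refine ⟨t * b, ?_⟩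
  convert hb.prodOfPal using 1
  rw [inl_mulSingle]
  simp only [map_mul, map_inv]
  group

theorem baseProdOfPal_mulSingle (hXA : Subgroup.closure XA = ⊤) {n : ℕ} {p : G}
    (hp : ProdOfPal XB n p) (t : A) : BaseProdOfPal XB XA n (mulSingle t p) := by
  obtain ⟨l, hlen, hl, rfl⟩ := hp
  rw [map_list_prod]
  refine (BaseProdOfPal.list_prod (n := 1) ?_).mono (by simpa using hlen)
  simp only [List.mem_map]
  rintro _ ⟨p, hp, rfl⟩
  exact baseProdOfPal_mulSingle_of_isPalindrome hXA (hl p hp) t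

theorem baseProdOfPal_of_forall [Fintype A] (hXA : Subgroup.closure XA = ⊤) {n : ℕ}
    {f : restrictedBase G A} (hf : ∀ t, ProdOfPal XB n ((f : A → G) t)) :
    BaseProdOfPal XB XA (Fintype.card A * n) f := by
  rw [← list_prod_map_mulSingle f]
  convert BaseProdOfPal.list_prod (n := n) ?_
  · simp
  · simp only [List.mem_map]
    rintro _ ⟨t, -, rfl⟩
    exact baseProdOfPal_mulSingle hXA (hf t) t

theorem mk_inl_mulSingle_one_commutatorElement_one_mem (hXB : Subgroup.closure XB = ⊤)
    {σ : G →* G} (hσ : ∀ x ∈ XB, σ x = x⁻¹) {ℓ : A} (hℓ : ℓ ≠ 1)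
    (hvert : ((1 : Wreath G A), (inr ℓ : Wreath G A)) ∈ pairGroup (wreathGens XB XA)) (u v : G) :
    ((inl (mulSingle 1 ⁅u, v⁆) : Wreath G A), (1 : Wreath G A)) ∈ pairGroup (wreathGens XB XA) := by
  have hgraph (w : G) : ((inl (mulSingle 1 w) : Wreath G A), inl (mulSingle 1 (σ w))) ∈
      pairGroup (wreathGens XB XA) :=
    map_mem_pairGroup (inl.comp (mulSingle 1)) (fun _ => inl_mulSingle_one_mem_wreathGens)
      (mk_map_mem_pairGroup hXB hσ w)
  -- conjugating by `inr ℓ` moves `σ u` to the coordinate `ℓ ≠ 1`, away from `σ v`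
  have hcomm : Commute (inr ℓ * inl (mulSingle 1 (σ u)) * (inr ℓ)⁻¹ : Wreath G A)
      (inl (mulSingle 1 (σ v))) := by
    rw [← map_inv, ← mul_one ℓ, ← inl_mulSingle, mul_one]
    exact (mulSingle_commute hℓ _ _).map inl
  simpa [map_commutatorElement] using
    mk_commutatorElement_one_mem hvert (hgraph u) (hgraph v) hcomm

theorem mk_inl_one_mem_pairGroup [Fintype A] (hXB : Subgroup.closure XB = ⊤)
    {σ : G →* G} (hσ : ∀ x ∈ XB, σ x = x⁻¹) (hXA : Subgroup.closure XA = ⊤) {ℓ : A} (hℓ : ℓ ≠ 1)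
    (hvert : ((1 : A), ℓ) ∈ pairGroup XA) {β : restrictedBase G A}
    (hβ : ∀ x, (β : A → G) x ∈ commutator G) :
    ((inl β : Wreath G A), (1 : Wreath G A)) ∈ pairGroup (wreathGens XB XA) := by
  have hinr {a b : A} (h : (a, b) ∈ pairGroup XA) :
      ((inr a : Wreath G A), (inr b : Wreath G A)) ∈ pairGroup (wreathGens XB XA) :=
    map_mem_pairGroup inr (fun _ => inr_mem_wreathGens) h
  let V : Subgroup (restrictedBase G A) :=
    (pairGroup (wreathGens XB XA)).comap ((inl : _ →* Wreath G A).prod 1)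
  have hcomm : commutator G ≤ V.comap (mulSingle 1) := by
    rw [commutator_def, Subgroup.commutator_le]
    rintro u - v -
    exact mk_inl_mulSingle_one_commutatorElement_one_mem hXB hσ hℓ
      (by simpa using hinr hvert) u v
  have hshift (t : A) {f : restrictedBase G A} (hf : f ∈ V) : wreathAction G A t f ∈ V := by
    obtain ⟨b, htb⟩ := exists_mem_pairGroup hXA t
    have hconj : ((inr t : Wreath G A), (inr b : Wreath G A)) * (inl f, 1) * (inr t, inr b)⁻¹ =
        (inl (wreathAction G A t f), 1) := by
      simp [inl_aut]
    change (inl (wreathAction G A t f), 1) ∈ pairGroup (wreathGens XB XA)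
    exact hconj ▸ mul_mem (mul_mem (hinr htb) hf) (inv_mem (hinr htb))
  refine mem_of_forall_mulSingle_mem (K := V) fun t => ?_
  simpa [wreathAction_mulSingle] using hshift t (hcomm (hβ t))

theorem exists_inl_mul_inr_mem_pairGroup [Fintype A] (hXB : Subgroup.closure XB = ⊤) {σ : G →* G}
    (hσ : ∀ x ∈ XB, σ x = x⁻¹) (hXA : Subgroup.closure XA = ⊤)
    (hno : ¬∃ ψ : A →* A, ∀ x ∈ XA, ψ x = x⁻¹) {n : ℕ}
    (hrep : ∀ v : G, ∃ p, ProdOfPal XB n p ∧ Abelianization.of p = Abelianization.of v)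
    (g : Wreath G A) : ∃ (f : restrictedBase G A) (h : A),
      (∀ t, ProdOfPal XB n ((f : A → G) t)) ∧
        (g, inl f * inr h) ∈ pairGroup (wreathGens XB XA) := by
  obtain ⟨ℓ, hℓ, hvert⟩ := exists_ne_one_mk_one_mem_pairGroup hXA hno
  obtain ⟨b, hgb⟩ := exists_mem_pairGroup (closure_wreathGens hXB hXA) g
  obtain ⟨f₀, h, rfl⟩ : ∃ f₀ h, b = inl f₀ * inr h := ⟨_, _, (inl_left_mul_inr_right b).symm⟩
  choose p hp hpf₀ using fun t => hrep ((f₀ : A → G) t)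
  let f : restrictedBase G A := ⟨p, Set.toFinite _⟩
  have hff₀ (t : A) : ((f * f₀⁻¹ : restrictedBase G A) : A → G) t ∈ commutator G := by
    rw [← Abelianization.ker_of, MonoidHom.mem_ker]
    simp [f, hpf₀]
  refine ⟨f, h, hp, ?_⟩
  have hmul := mul_mem (swap_mem_pairGroup (mk_inl_one_mem_pairGroup hXB hσ hXA hℓ hvert hff₀)) hgb
  rwa [Prod.mk_mul_mk, one_mul, map_mul, map_inv, mul_assoc, inv_mul_cancel_left] at hmul

theorem prodOfPal_of_inl_mul_inr_mem_pairGroup [Fintype A] (hXA : Subgroup.closure XA = ⊤) {m n : ℕ}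
    (hm : ∀ a, ProdOfPal (wreathGens XB XA) m (inr a)) {f : restrictedBase G A}
    (hf : ∀ t, ProdOfPal XB n ((f : A → G) t)) {g : Wreath G A} {h : A}
    (hg : (g, inl f * inr h) ∈ pairGroup (wreathGens XB XA)) :
    ProdOfPal (wreathGens XB XA) (1 + (Fintype.card A * n + m)) g := by
  obtain ⟨b, hb⟩ := baseProdOfPal_of_forall hXA hf 1
  convert (IsPalindrome.mul_inv_of_mem_pairGroup hg).prodOfPal.mul (hb.mul (hm (b⁻¹ * h))) using 1
  simp only [map_one, one_mul, map_mul, map_inv]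
  group

end Wreath

open SemidirectProduct in
/-- Let `H` be a finite non-abelian group generated by `X`, with
`M = max { l_X(h) : h ∈ H }`, and `F_d` the free group of rank `d`. Then there is `c ∈ H`
(possibly `c = 1`) such that every element of `F_d ≀ H` is a product of at most
`M·(d·|H| + 1) + 1` palindromes with respect to the canonical copies of `X ∪ {c}` and of
the free generating set of `F_d`. -/
theorem free_wreath_finite_palindromic_width {H : Type*} [Group H] [Fintype H]
    (X : Finset H) (hX : Subgroup.closure (X : Set H) = ⊤)
    (hna : ∃ a b : H, a * b ≠ b * a)
    (d : ℕ) (M : ℕ) (hM : M = Finset.univ.sup fun h : H => wordLength (X : Set H) h) :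
    ∃ c : H, ∀ g : Wreath (FreeGroup (Fin d)) H,
      ProdOfPal
        (wreathGens (Set.range (FreeGroup.of : Fin d → FreeGroup (Fin d)))
          ((X : Set H) ∪ {c}))
        (M * (d * Fintype.card H + 1) + 1) g := by
  have hle_M (h : H) : wordLength (X : Set H) h ≤ M := hM ▸ Finset.le_sup (Finset.mem_univ h)
  have hM_pos : 0 < M := by
    obtain ⟨a, b, hab⟩ := hna
    exact (wordLength_pos hX (by rintro rfl; simp at hab)).trans_le (hle_M b)
  obtain ⟨c, hc⟩ := exists_not_exists_monoidHom_eq_inv hX hna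
  refine ⟨c, fun g => ?_⟩
  have hXc : Subgroup.closure ((X : Set H) ∪ {c}) = ⊤ :=
    eq_top_iff.2 (hX ▸ Subgroup.closure_mono Set.subset_union_left)
  have hσ : ∀ y ∈ Set.range FreeGroup.of,
      FreeGroup.lift (fun i : Fin d => (FreeGroup.of i)⁻¹) y = y⁻¹ := by
    rintro _ ⟨i, rfl⟩
    simp
  obtain ⟨f, h, hf, hg⟩ := exists_inl_mul_inr_mem_pairGroup (FreeGroup.closure_range_of _) hσ hXc
    hc FreeGroup.exists_prodOfPal_abelianization_of_eq g
  refine (prodOfPal_of_inl_mul_inr_mem_pairGroup hXc (m := M) (fun a => ?_) hf hg).mono ?_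
  · exact ((prodOfPal_wordLength hX a).map inr fun _ hx =>
      inr_mem_wreathGens (Set.mem_union_left _ hx)).mono (hle_M a)
  · nlinarith [Nat.mul_le_mul_right (d * Fintype.card H) hM_pos]
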